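/- arXiv:0710.0297 — 2 statements merged into one kernel-verified Lean document; each statement's English description precedes it below -/
import Mathlib

section
/- Every point of the tangent variety of the rational normal curve (1,x,x²,x³,x⁴) in ℝ⁵ lies on both hypersurfaces Υ = 0 and g = 0: for all x, s ∈ ℝ, if θ = (1, x + s, x² + 2xs, x³ + 3x²s, x⁴ + 4x³s), then Υ(θ) = 0 and g(θ) = 0. -/
/-- The bilinear form `g(θ) = θ₀θ₄ − 4θ₁θ₃ + 3θ₂²`. -/
noncomputable def gq (θ0 θ1 θ2 θ3 θ4 : ℝ) : ℝ :=
  θ0 * θ4 - 4 * θ1 * θ3 + 3 * θ2 ^ 2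

/-- The cubic form `Υ(θ) = 3√3(θ₀θ₂θ₄ + 2θ₁θ₂θ₃ − θ₂³ − θ₀θ₃² − θ₄θ₁²)`. -/
noncomputable def Ups (θ0 θ1 θ2 θ3 θ4 : ℝ) : ℝ :=
  3 * Real.sqrt 3 *
    (θ0 * θ2 * θ4 + 2 * θ1 * θ2 * θ3 - θ2 ^ 3 - θ0 * θ3 ^ 2 - θ4 * θ1 ^ 2)

/-- Every point `T(x,s) = γ(x) + s(0, 1, 2x, 3x², 4x³)` of the tangent variety of the
rational normal curve `γ(x) = (1,x,x²,x³,x⁴)` satisfies both `Υ = 0` and `g = 0`. -/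
theorem stmt5 (x s : ℝ) :
    Ups 1 (x + s) (x ^ 2 + 2 * x * s) (x ^ 3 + 3 * x ^ 2 * s) (x ^ 4 + 4 * x ^ 3 * s) = 0 ∧
    gq 1 (x + s) (x ^ 2 + 2 * x * s) (x ^ 3 + 3 * x ^ 2 * s) (x ^ 4 + 4 * x ^ 3 * s) = 0 := by
  constructor <;> simp only [Ups, gq] <;> ring
end

section
/- Let q : ℝ → ℝ be twice differentiable on the interval (0,∞). If q satisfies the first order equation 25·q(z) − 60·z·q'(z) + 27·z^{4/3}·q'(z)² = 0 for all z > 0, then q also satisfies the second order equation 90·z^{4/3}·(3q(z) − 4z^{2/3})·q''(z) − 54·z^{4/3}·q'(z)² + 30·z^{1/3}·(6q(z) − 5z^{2/3})·q'(z) − 25·q(z) = 0 for all z > 0. -/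
/-!
Differentiating the first order equation `F = 25 q - 60 z q' + 27 z^{4/3} q'^2 = 0`, which holds on
the open set `(0,∞)`, gives `F' = 0` there. In the variable `u = z^{1/3}` the quantities `F`, `F'`
and the second order expression are polynomials in `u, q, q', q''`, and the latter lies in the
ideal generated by `F`, `F'` and `u^3 - z`.
-/

open Filter Topology

theorem HasDerivAt.eq_zero_of_eventuallyEq_const {𝕜 F : Type*} [NontriviallyNormedField 𝕜]
    [NormedAddCommGroup F] [NormedSpace 𝕜 F] {f : 𝕜 → F} {f' : F} {x : 𝕜} (c : F)
    (hf : HasDerivAt f f' x) (h : f =ᶠ[𝓝 x] fun _ => c) : f' = 0 :=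
  hf.unique ((hasDerivAt_const x c).congr_of_eventuallyEq h)

theorem hasDerivAt_firstOrderResidual {q q' : ℝ → ℝ} {z w : ℝ} (hz : 0 < z)
    (hq : HasDerivAt q (q' z) z) (hq' : HasDerivAt q' w z) :
    HasDerivAt (fun x => 25 * q x - 60 * x * q' x + 27 * x ^ ((4 : ℝ) / 3) * q' x ^ 2)
      (-35 * q' z - 60 * z * w + 36 * z ^ ((1 : ℝ) / 3) * q' z ^ 2
        + 54 * z ^ ((4 : ℝ) / 3) * q' z * w) z := by
  have hrpow : HasDerivAt (fun x : ℝ => x ^ ((4 : ℝ) / 3)) ((4 / 3) * z ^ ((1 : ℝ) / 3)) z := by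
    convert Real.hasDerivAt_rpow_const (p := 4 / 3) (Or.inl hz.ne') using 3
    norm_num
  refine (((hq.const_mul 25).sub (((hasDerivAt_id z).const_mul 60).mul hq')).add
    ((hrpow.const_mul 27).mul (hq'.pow 2))).congr_deriv ?_
  simp only [id, Pi.pow_apply]
  ring

theorem secondOrder_eq_zero_of_firstOrder {z u Q P W : ℝ} (hu : u ^ 3 = z)
    (hF : 25 * Q - 60 * z * P + 27 * u ^ 4 * P ^ 2 = 0)
    (hF' : -35 * P - 60 * z * W + 36 * u * P ^ 2 + 54 * u ^ 4 * P * W = 0) :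
    90 * u ^ 4 * (3 * Q - 4 * u ^ 2) * W - 54 * u ^ 4 * P ^ 2
      + 30 * u * (6 * Q - 5 * u ^ 2) * P - 25 * Q = 0 := by
  linear_combination (54 / 5 * u ^ 4 * W + 36 / 5 * u * P - 1) * hF
    + (6 * u ^ 3 - 27 / 5 * u ^ 4 * P) * hF'
    - (324 * u ^ 4 * P * W + 432 * u * P ^ 2 - 60 * P + 360 * u ^ 3 * W) * hu

/-- If a twice differentiable `q` on `(0,∞)` satisfies the first order ODE
`25q − 60z q' + 27 z^{4/3} q'² = 0`, then it satisfies the second order ODE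
`90 z^{4/3}(3q − 4z^{2/3})q'' − 54 z^{4/3} q'² + 30 z^{1/3}(6q − 5z^{2/3})q' − 25q = 0`. -/
theorem stmt15 (q : ℝ → ℝ)
    (hq : ∀ z : ℝ, 0 < z → DifferentiableAt ℝ q z)
    (hq' : ∀ z : ℝ, 0 < z → DifferentiableAt ℝ (deriv q) z)
    (hode : ∀ z : ℝ, 0 < z →
      25 * q z - 60 * z * deriv q z + 27 * z ^ ((4 : ℝ) / 3) * (deriv q z) ^ 2 = 0) :
    ∀ z : ℝ, 0 < z →
      90 * z ^ ((4 : ℝ) / 3) * (3 * q z - 4 * z ^ ((2 : ℝ) / 3)) * deriv (deriv q) z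
        - 54 * z ^ ((4 : ℝ) / 3) * (deriv q z) ^ 2
        + 30 * z ^ ((1 : ℝ) / 3) * (6 * q z - 5 * z ^ ((2 : ℝ) / 3)) * deriv q z
        - 25 * q z = 0 := by
  intro z hz
  have hF' := (hasDerivAt_firstOrderResidual hz (hq z hz).hasDerivAt
    (hq' z hz).hasDerivAt).eq_zero_of_eventuallyEq_const 0
    (eventually_of_mem (Ioi_mem_nhds hz) hode)
  have hpow (k : ℕ) : z ^ ((k : ℝ) / 3) = (z ^ ((1 : ℝ) / 3)) ^ k := by
    rw [← Real.rpow_mul_natCast hz.le]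
    ring_nf
  have h2 : z ^ ((2 : ℝ) / 3) = (z ^ ((1 : ℝ) / 3)) ^ 2 := by exact_mod_cast hpow 2
  have hcube : (z ^ ((1 : ℝ) / 3)) ^ 3 = z := by simpa using (hpow 3).symm
  have h4 : z ^ ((4 : ℝ) / 3) = (z ^ ((1 : ℝ) / 3)) ^ 4 := by exact_mod_cast hpow 4
  have hF := hode z hz
  rw [h4] at hF hF'
  rw [h4, h2]
  exact secondOrder_eq_zero_of_firstOrder hcube hF hF'
end
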